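/- Marginals of the limiting Mallows density: for β ≠ 0 and u(x,y) = (β/2)sinh(β/2)/(e^{β/4}cosh(β(x−y)/2) − e^{−β/4}cosh(β(x+y−1)/2))², one has ∫_0^1 u(x,y) dy = 1 for every x ∈ [0,1], and ∫_0^1 u(x,y) dx = 1 for every y ∈ [0,1]. -/

import Mathlib

/-!
For fixed `x`, the denominator `D y` of `uMain β x y` is `p e^{βy/2} + q e^{-βy/2}` with
`p = e^{-β/4} sinh (β(1-x)/2)` and `q = e^{β/4} sinh (βx/2)`. For `x ∈ [0,1]` both `βp` and
`βq` are nonnegative and not both zero, so `D` has no zero. For any such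
`D = p e^{sy} + q e^{-sy}`, `sinh (s(y-a)) / (s D(a) D(y))` is an antiderivative of `1 / D(y)²`,
whence `∫_a^b D⁻² = sinh (s(b-a)) / (s D(a) D(b))`; the identity `D(0) D(1) = sinh² (β/2)` then
makes the marginal equal to `1`. The other marginal follows from the symmetry `u(x,y) = u(y,x)`.
-/

/-- The limiting Mallows density. -/
noncomputable def uMain (β x y : ℝ) : ℝ :=
  (β / 2) * Real.sinh (β / 2) /
    (Real.exp (β / 4) * Real.cosh (β * (x - y) / 2)
      - Real.exp (-β / 4) * Real.cosh (β * (x + y - 1) / 2)) ^ 2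

open Real Set intervalIntegral

theorem hasDerivAt_exp_combination (p q s y : ℝ) :
    HasDerivAt (fun y => p * exp (s * y) + q * exp (-(s * y)))
      (s * (p * exp (s * y) - q * exp (-(s * y)))) y := by
  have hlin := (hasDerivAt_id' y).const_mul s
  have h : HasDerivAt (fun y => p * exp (s * y) + q * exp (-(s * y)))
      (p * (exp (s * y) * (s * 1)) + q * (exp (-(s * y)) * -(s * 1))) y :=
    (hlin.exp.const_mul p).add (hlin.neg.exp.const_mul q)
  exact h.congr_deriv (by ring)

theorem cosh_mul_exp_combination_sub_sinh_mul (p q s a y : ℝ) :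
    cosh (s * (y - a)) * (p * exp (s * y) + q * exp (-(s * y)))
      - sinh (s * (y - a)) * (p * exp (s * y) - q * exp (-(s * y)))
      = p * exp (s * a) + q * exp (-(s * a)) := by
  rw [cosh_eq, sinh_eq, show s * (y - a) = s * y - s * a by ring]
  simp only [exp_neg, exp_sub]
  field_simp
  ring

theorem integral_inv_sq_exp_combination {p q s a b : ℝ} (hs : s ≠ 0)
    (hD : ∀ y ∈ uIcc a b, p * exp (s * y) + q * exp (-(s * y)) ≠ 0) :
    ∫ y in a..b, ((p * exp (s * y) + q * exp (-(s * y))) ^ 2)⁻¹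
      = sinh (s * (b - a)) / (s * (p * exp (s * a) + q * exp (-(s * a)))
          * (p * exp (s * b) + q * exp (-(s * b)))) := by
  set D : ℝ → ℝ := fun y => p * exp (s * y) + q * exp (-(s * y))
  have hDa : D a ≠ 0 := hD a left_mem_uIcc
  have hderiv : ∀ y ∈ uIcc a b,
      HasDerivAt (fun y => sinh (s * (y - a)) / (s * D a * D y)) ((D y ^ 2)⁻¹) y := by
    intro y hy
    have hDy : D y ≠ 0 := hD y hy
    have hlin := ((hasDerivAt_id' y).sub_const a).const_mul s
    have h : HasDerivAt (fun y => sinh (s * (y - a)) / (s * D a * D y))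
        ((cosh (s * (y - a)) * (s * 1) * (s * D a * D y)
          - sinh (s * (y - a)) * (s * D a * (s * (p * exp (s * y) - q * exp (-(s * y))))))
          / (s * D a * D y) ^ 2) y :=
      hlin.sinh.div ((hasDerivAt_exp_combination p q s y).const_mul (s * D a))
        (mul_ne_zero (mul_ne_zero hs hDa) hDy)
    refine h.congr_deriv ?_
    have key := cosh_mul_exp_combination_sub_sinh_mul p q s a y
    field_simp
    linear_combination key
  have hint : IntervalIntegrable (fun y => (D y ^ 2)⁻¹) MeasureTheory.volume a b :=
    (ContinuousOn.inv₀ (by fun_prop) fun y hy => pow_ne_zero 2 (hD y hy)).intervalIntegrable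
  rw [integral_eq_sub_of_hasDerivAt hderiv hint, sub_self, mul_zero, sinh_zero, zero_div,
    sub_zero]

noncomputable def mallowsDenom (β x y : ℝ) : ℝ :=
  exp (β / 4) * cosh (β * (x - y) / 2) - exp (-β / 4) * cosh (β * (x + y - 1) / 2)

theorem uMain_eq_div_mallowsDenom_sq (β x y : ℝ) :
    uMain β x y = β / 2 * sinh (β / 2) / mallowsDenom β x y ^ 2 :=
  rfl

theorem uMain_comm (β x y : ℝ) : uMain β x y = uMain β y x := by
  rw [uMain, uMain, show β * (y - x) / 2 = -(β * (x - y) / 2) by ring, cosh_neg, add_comm y x]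

theorem mallowsDenom_eq_exp_combination (β x y : ℝ) :
    mallowsDenom β x y = exp (-β / 4) * sinh (β * (1 - x) / 2) * exp (β / 2 * y)
      + exp (β / 4) * sinh (β * x / 2) * exp (-(β / 2 * y)) := by
  rw [mallowsDenom, cosh_eq, cosh_eq, sinh_eq, sinh_eq,
    show β * (x - y) / 2 = β * x / 2 - β / 2 * y by ring,
    show β * (x + y - 1) / 2 = β * x / 2 + β / 2 * y - (β / 4 + β / 4) by ring,
    show β * (1 - x) / 2 = β / 4 + β / 4 - β * x / 2 by ring,
    show -β / 4 = -(β / 4) by ring]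
  simp only [exp_neg, exp_sub, exp_add]
  field_simp
  ring

theorem mallowsDenom_zero_mul_mallowsDenom_one (β x : ℝ) :
    mallowsDenom β x 0 * mallowsDenom β x 1 = sinh (β / 2) ^ 2 := by
  rw [mallowsDenom, mallowsDenom, cosh_eq, cosh_eq, cosh_eq, cosh_eq, sinh_eq,
    show β * (x - 0) / 2 = β * x / 2 by ring,
    show β * (x + 0 - 1) / 2 = β * x / 2 - (β / 4 + β / 4) by ring,
    show β * (x - 1) / 2 = β * x / 2 - (β / 4 + β / 4) by ring,
    show β * (x + 1 - 1) / 2 = β * x / 2 by ring,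
    show β / 2 = β / 4 + β / 4 by ring, show -β / 4 = -(β / 4) by ring]
  simp only [exp_neg, exp_sub, exp_add]
  field_simp
  ring

theorem mul_sinh_mul_nonneg (β : ℝ) {z : ℝ} (hz : 0 ≤ z) : 0 ≤ β * sinh (β * z) := by
  rcases le_total β 0 with hβ | hβ
  · exact mul_nonneg_of_nonpos_of_nonpos hβ
      (sinh_nonpos_iff.2 (mul_nonpos_of_nonpos_of_nonneg hβ hz))
  · exact mul_nonneg hβ (sinh_nonneg_iff.2 (mul_nonneg hβ hz))

theorem mul_sinh_mul_pos {β z : ℝ} (hβ : β ≠ 0) (hz : 0 < z) : 0 < β * sinh (β * z) := by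
  rcases hβ.lt_or_gt with hβ | hβ
  · exact mul_pos_of_neg_of_neg hβ (sinh_neg_iff.2 (mul_neg_of_neg_of_pos hβ hz))
  · exact mul_pos hβ (sinh_pos_iff.2 (mul_pos hβ hz))

theorem mul_mallowsDenom_pos {β x : ℝ} (hβ : β ≠ 0) (hx : x ∈ Icc (0 : ℝ) 1) (y : ℝ) :
    0 < β * mallowsDenom β x y := by
  have hsplit : β * mallowsDenom β x y
      = exp (-β / 4) * exp (β / 2 * y) * (β * sinh (β * ((1 - x) / 2)))
        + exp (β / 4) * exp (-(β / 2 * y)) * (β * sinh (β * (x / 2))) := by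
    rw [mallowsDenom_eq_exp_combination, mul_div_assoc', mul_div_assoc']
    ring
  rw [hsplit]
  rcases hx.1.eq_or_lt with rfl | hx0
  · exact add_pos_of_pos_of_nonneg
      (mul_pos (by positivity) (mul_sinh_mul_pos hβ (by norm_num)))
      (mul_nonneg (by positivity) (mul_sinh_mul_nonneg β (by norm_num)))
  · exact add_pos_of_nonneg_of_pos
      (mul_nonneg (by positivity) (mul_sinh_mul_nonneg β (by linarith [hx.2])))
      (mul_pos (by positivity) (mul_sinh_mul_pos hβ (by linarith)))

theorem integral_uMain_right {β x : ℝ} (hβ : β ≠ 0) (hx : x ∈ Icc (0 : ℝ) 1) :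
    ∫ y in (0 : ℝ)..1, uMain β x y = 1 := by
  have hD : ∀ y, mallowsDenom β x y ≠ 0 := fun y =>
    right_ne_zero_of_mul (mul_mallowsDenom_pos hβ hx y).ne'
  simp_rw [uMain_eq_div_mallowsDenom_sq, div_eq_mul_inv _ (mallowsDenom β x _ ^ 2),
    mallowsDenom_eq_exp_combination]
  rw [integral_const_mul, integral_inv_sq_exp_combination (div_ne_zero hβ two_ne_zero)
    fun y _ => mallowsDenom_eq_exp_combination β x y ▸ hD y]
  rw [← mallowsDenom_eq_exp_combination, ← mallowsDenom_eq_exp_combination,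
    mul_assoc (β / 2) (mallowsDenom β x 0), mallowsDenom_zero_mul_mallowsDenom_one, sub_zero,
    mul_one]
  have hsinh : sinh (β / 2) ≠ 0 := sinh_ne_zero.2 (div_ne_zero hβ two_ne_zero)
  field_simp

/-- Both marginals of the limiting Mallows density are uniform on `[0,1]`. -/
theorem mallows_density_marginals (β : ℝ) (hβ : β ≠ 0) :
    (∀ x ∈ Set.Icc (0:ℝ) 1, ∫ y in (0:ℝ)..1, uMain β x y = 1) ∧
    (∀ y ∈ Set.Icc (0:ℝ) 1, ∫ x in (0:ℝ)..1, uMain β x y = 1) := by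
  refine ⟨fun x hx => integral_uMain_right hβ hx, fun y hy => ?_⟩
  simp_rw [uMain_comm β _ y]
  exact integral_uMain_right hβ hy
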